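/- Let R → S be a ring homomorphism of commutative rings and M an S-module. Suppose g : S ⊗[R] M → M ⊗[R] S is an S⊗S-module homomorphism satisfying the cocycle condition g₁₃ = g₁₂ ∘ g₂₃ on S ⊗ S ⊗ M, and such that the composite M → S ⊗[R] M → M ⊗[R] S → M (where the first map is m ↦ 1 ⊗ m and the last map is multiplication m ⊗ s ↦ s•m) is the identity. Then g is an isomorphism, with inverse τ ∘ g ∘ τ where τ swaps the two tensor factors. -/

import Mathlib

/-!
Write `h = τ ∘ g ∘ τ`. Since `g` is `S ⊗ S`-linear, `h` intertwines the two `S`-actions the other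
way round, so `h ∘ g` commutes with the action of `S` on the first factor and it suffices to show
`h (g (1 ⊗ m)) = 1 ⊗ m`. This is the cocycle condition at `1 ⊗ 1 ⊗ m` after contracting the last
factor into `M`: the contraction turns `g₁₃` into `1 ⊗ μ (g (1 ⊗ m)) = 1 ⊗ m` and `g₁₂ ∘ g₂₃`
into `h (g (1 ⊗ m))`. Finally `g ∘ h = τ⁻¹ ∘ (h ∘ g) ∘ τ`.
-/

open TensorProduct

/-- The "multiply the `S`-tensorand into `M`" map `M ⊗[R] S → M`, `m ⊗ s ↦ s • m`. -/
noncomputable def descentMu (R S M : Type) [CommRing R] [CommRing S] [Algebra R S]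
    [AddCommGroup M] [Module R M] [Module S M] [IsScalarTower R S M] :
    M ⊗[R] S →ₗ[R] M :=
  TensorProduct.lift <| LinearMap.mk₂ R (fun m s => s • m)
    (fun m m' s => smul_add s m m')
    (fun r m s => smul_comm s r m |>.symm ▸ (smul_comm (s : S) (r : R) m))
    (fun m s s' => add_smul s s' m)
    (fun r m s => smul_assoc r s m)

/-- The action of `s` in the `S`-tensorand slot, as an `R`-linear endomap of `M`. -/
noncomputable def descentSmul (R S M : Type) [CommRing R] [CommRing S] [Algebra R S]
    [AddCommGroup M] [Module R M] [Module S M] [IsScalarTower R S M] (s : S) :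
    M →ₗ[R] M :=
  (LinearMap.lsmul S M s).restrictScalars R

namespace TensorProduct

variable {R N P : Type*} [CommSemiring R] [AddCommMonoid N] [AddCommMonoid P]
  [Module R N] [Module R P]

noncomputable def commConj (f : N ⊗[R] P →ₗ[R] P ⊗[R] N) : P ⊗[R] N →ₗ[R] N ⊗[R] P :=
  (TensorProduct.comm R P N).toLinearMap ∘ₗ f ∘ₗ (TensorProduct.comm R P N).toLinearMap

@[simp] lemma commConj_apply (f : N ⊗[R] P →ₗ[R] P ⊗[R] N) (x : P ⊗[R] N) :
    commConj f x = TensorProduct.comm R P N (f (TensorProduct.comm R P N x)) := rfl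

lemma comp_commConj_eq_id {f : N ⊗[R] P →ₗ[R] P ⊗[R] N}
    (h : commConj f ∘ₗ f = LinearMap.id) : f ∘ₗ commConj f = LinearMap.id :=
  LinearMap.ext fun x => (TensorProduct.comm R P N).injective <| by
    simpa using LinearMap.congr_fun h (TensorProduct.comm R P N x)

end TensorProduct

section DescentDatum

variable {R S M : Type} [CommRing R] [CommRing S] [Algebra R S]
  [AddCommGroup M] [Module R M] [Module S M] [IsScalarTower R S M]

@[simp] lemma descentMu_tmul (m : M) (s : S) : descentMu R S M (m ⊗ₜ[R] s) = s • m := by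
  simp [descentMu]

@[simp] lemma descentSmul_apply (s : S) (m : M) : descentSmul R S M s m = s • m := rfl

noncomputable def descentContract : (M ⊗[R] S) ⊗[R] S →ₗ[R] S ⊗[R] M :=
  (descentMu R S M).lTensor S ∘ₗ (TensorProduct.assoc R S M S).toLinearMap ∘ₗ
    (TensorProduct.comm R M S).toLinearMap.rTensor S

@[simp] lemma descentContract_tmul (m : M) (s' s'' : S) :
    descentContract ((m ⊗ₜ[R] s') ⊗ₜ[R] s'') = s' ⊗ₜ[R] (s'' • m) := by
  simp [descentContract]

lemma descentContract_tmul_right (y : M ⊗[R] S) (s : S) :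
    descentContract (y ⊗ₜ[R] s) = TensorProduct.comm R M S ((descentSmul R S M s).rTensor S y) := by
  induction y using TensorProduct.induction_on with
  | zero => simp
  | tmul m t => simp
  | add a b ha hb => simp only [add_tmul, map_add, ha, hb]

lemma descentContract_swap_tmul_one (x : M ⊗[R] S) :
    descentContract ((TensorProduct.assoc R M S S).symm
      ((TensorProduct.comm R S S).toLinearMap.lTensor M
        (TensorProduct.assoc R M S S (x ⊗ₜ[R] 1)))) = 1 ⊗ₜ[R] descentMu R S M x := by
  induction x using TensorProduct.induction_on with
  | zero => simp
  | tmul m s => simp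
  | add a b ha hb => simp only [add_tmul, map_add, ha, hb, tmul_add]

variable {g : S ⊗[R] M →ₗ[R] M ⊗[R] S}

lemma apply_tmul_eq_rTensor_apply_one_tmul
    (hg₁ : ∀ s : S, g ∘ₗ (LinearMap.mulLeft R s).rTensor M = (descentSmul R S M s).rTensor S ∘ₗ g)
    (s : S) (m : M) : g (s ⊗ₜ[R] m) = (descentSmul R S M s).rTensor S (g (1 ⊗ₜ[R] m)) := by
  simpa using LinearMap.congr_fun (hg₁ s) (1 ⊗ₜ[R] m)

lemma descentContract_rTensor_one_tmul
    (hg₁ : ∀ s : S, g ∘ₗ (LinearMap.mulLeft R s).rTensor M = (descentSmul R S M s).rTensor S ∘ₗ g)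
    (x : M ⊗[R] S) :
    descentContract (g.rTensor S ((TensorProduct.assoc R S M S).symm (1 ⊗ₜ[R] x))) =
      commConj g x := by
  induction x using TensorProduct.induction_on with
  | zero => simp
  | tmul m s =>
    rw [TensorProduct.assoc_symm_tmul, LinearMap.rTensor_tmul, descentContract_tmul_right,
      commConj_apply, TensorProduct.comm_tmul, apply_tmul_eq_rTensor_apply_one_tmul hg₁ s m]
  | add a b ha hb => simp only [tmul_add, map_add, ha, hb]

lemma commConj_comp_rTensor_descentSmul
    (hg₂ : ∀ s : S, g ∘ₗ (descentSmul R S M s).lTensor S = (LinearMap.mulLeft R s).lTensor M ∘ₗ g)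
    (s : S) :
    commConj g ∘ₗ (descentSmul R S M s).rTensor S = (LinearMap.mulLeft R s).rTensor M ∘ₗ commConj g :=
  LinearMap.ext fun x => by
    rw [LinearMap.comp_apply, commConj_apply, ← LinearMap.lTensor_comm,
      ← LinearMap.comp_apply g, hg₂, LinearMap.comp_apply, ← LinearMap.rTensor_comm]
    rfl

lemma commConj_apply_apply_one_tmul
    (hg₁ : ∀ s : S, g ∘ₗ (LinearMap.mulLeft R s).rTensor M = (descentSmul R S M s).rTensor S ∘ₗ g)
    (hcocycle :
      ((TensorProduct.assoc R M S S).symm.toLinearMap ∘ₗ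
        ((TensorProduct.comm R S S).toLinearMap.lTensor M) ∘ₗ
        (TensorProduct.assoc R M S S).toLinearMap ∘ₗ
        g.rTensor S ∘ₗ
        (TensorProduct.assoc R S M S).symm.toLinearMap ∘ₗ
        ((TensorProduct.comm R S M).toLinearMap.lTensor S))
      = (g.rTensor S ∘ₗ (TensorProduct.assoc R S M S).symm.toLinearMap) ∘ₗ g.lTensor S)
    (hunit : ∀ m : M, descentMu R S M (g ((1 : S) ⊗ₜ[R] m)) = m) (m : M) :
    commConj g (g (1 ⊗ₜ[R] m)) = 1 ⊗ₜ[R] m := by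
  have h := congrArg descentContract (LinearMap.congr_fun hcocycle (1 ⊗ₜ[R] (1 ⊗ₜ[R] m)))
  simp only [LinearMap.coe_comp, Function.comp_apply, LinearEquiv.coe_coe,
    LinearMap.lTensor_tmul, TensorProduct.comm_tmul, TensorProduct.assoc_symm_tmul,
    LinearMap.rTensor_tmul] at h
  rw [descentContract_swap_tmul_one, hunit, descentContract_rTensor_one_tmul hg₁] at h
  exact h.symm

end DescentDatum

/-- **Descent datum rigidity.** Let `R → S` be a map of commutative rings and `M` an
`S`-module.  If `g : S ⊗[R] M → M ⊗[R] S` is an `S ⊗ S`-module map (equivariance for the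
two outer `S`-actions), satisfies the cocycle condition `g₁₃ = g₁₂ ∘ g₂₃` on
`S ⊗ S ⊗ M`, and the composite `M → S ⊗ M → M ⊗ S → M` is the identity, then `g` is an
isomorphism with inverse `τ ∘ g ∘ τ`, where `τ` swaps tensor factors. -/
theorem descent_datum_is_iso
    (R S M : Type) [CommRing R] [CommRing S] [Algebra R S]
    [AddCommGroup M] [Module R M] [Module S M] [IsScalarTower R S M]
    (g : S ⊗[R] M →ₗ[R] M ⊗[R] S)
    -- `g` is `S ⊗ S`-linear: first tensorand `S`-action
    (hg₁ : ∀ s : S,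
      g ∘ₗ (LinearMap.mulLeft R s).rTensor M
        = (descentSmul R S M s).rTensor S ∘ₗ g)
    -- `g` is `S ⊗ S`-linear: second tensorand `S`-action
    (hg₂ : ∀ s : S,
      g ∘ₗ (descentSmul R S M s).lTensor S
        = (LinearMap.mulLeft R s).lTensor M ∘ₗ g)
    -- the cocycle condition `g₁₃ = g₁₂ ∘ g₂₃`
    (hcocycle :
      ((TensorProduct.assoc R M S S).symm.toLinearMap ∘ₗ
        ((TensorProduct.comm R S S).toLinearMap.lTensor M) ∘ₗ
        (TensorProduct.assoc R M S S).toLinearMap ∘ₗ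
        g.rTensor S ∘ₗ
        (TensorProduct.assoc R S M S).symm.toLinearMap ∘ₗ
        ((TensorProduct.comm R S M).toLinearMap.lTensor S))
      = (g.rTensor S ∘ₗ (TensorProduct.assoc R S M S).symm.toLinearMap) ∘ₗ g.lTensor S)
    -- the composite `M → S ⊗ M → M ⊗ S → M` is the identity
    (hunit : ∀ m : M, descentMu R S M (g ((1 : S) ⊗ₜ[R] m)) = m) :
    Function.Bijective g ∧
      ((TensorProduct.comm R M S).toLinearMap ∘ₗ g ∘ₗ
          (TensorProduct.comm R M S).toLinearMap) ∘ₗ g = LinearMap.id ∧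
      g ∘ₗ ((TensorProduct.comm R M S).toLinearMap ∘ₗ g ∘ₗ
          (TensorProduct.comm R M S).toLinearMap) = LinearMap.id := by
  have hleft : commConj g ∘ₗ g = LinearMap.id := by
    refine TensorProduct.ext' fun s m => ?_
    have hs : s ⊗ₜ[R] m = (LinearMap.mulLeft R s).rTensor M (1 ⊗ₜ[R] m) := by simp
    rw [LinearMap.comp_apply, apply_tmul_eq_rTensor_apply_one_tmul hg₁,
      ← LinearMap.comp_apply (commConj g), commConj_comp_rTensor_descentSmul hg₂,
      LinearMap.comp_apply, commConj_apply_apply_one_tmul hg₁ hcocycle hunit, hs]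
    rfl
  have hright : g ∘ₗ commConj g = LinearMap.id := comp_commConj_eq_id hleft
  exact ⟨Function.bijective_iff_has_inverse.mpr
    ⟨commConj g, LinearMap.congr_fun hleft, LinearMap.congr_fun hright⟩, hleft, hright⟩
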